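/- arXiv:1211.7342 — 2 statements merged into one kernel-verified Lean document; each statement's English description precedes it below -/
import Mathlib

section
/- Let a(λ)=sinh(λ+γ), b(λ)=sinh(λ), c=sinh(γ), and for fixed μ₁,…,μ_L ∈ ℂ and λ₁^B,…,λ_n^B, λ₁^C,…,λ_n^C ∈ ℂ define, for λ₀ ∈ ℂ, M₀(λ₀) = ∏_{j=1}^L a(λ₀-μⱼ) [∏_{i=1}^n a(λᵢ^C-λ₀)/b(λᵢ^C-λ₀) - ∏_{i=1}^n a(λᵢ^B-λ₀)/b(λᵢ^B-λ₀)] and N_i^{(B)}(λ₀) = (c(λᵢ^B-λ₀)/b(λᵢ^B-λ₀)) ∏_{j=1}^L a(λᵢ^B-μⱼ) ∏_{j≠i} a(λⱼ^B-λᵢ^B)/b(λⱼ^B-λᵢ^B), with c(λ)=sinh(γ) constant. Then lim_{λ₀→λᵢ^B} b(λ₀-λᵢ^B) M₀(λ₀) = - lim_{λ₀→λᵢ^B} b(λ₀-λᵢ^B) N_i^{(B)}(λ₀) = c ∏_{j=1}^L a(λᵢ^B-μⱼ) ∏_{j≠i} a(λⱼ^B-λᵢ^B)/b(λⱼ^B-λᵢ^B),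 assuming λᵢ^B-λⱼ^B ∉ πiℤ for j≠i and λᵢ^B-λⱼ^C ∉ πiℤ for all j. -/
/-!
Near `λ₀ = λᵢᴮ` the only singular factor is `1 / b(λᵢᴮ - λ₀)`, which occurs in `Nᵢᴮ` and in the
`i`-th factor of the `B`-product of `M₀`; every other factor is continuous there by the
hypotheses on `λᴮ` and `λᶜ`. Since `b(λ₀ - λᵢᴮ) = -b(λᵢᴮ - λ₀)`, multiplying by `b(λ₀ - λᵢᴮ)`
replaces that pole by `-1` and kills the regular terms, so both limits are values of
continuous functions at `λᵢᴮ`, with `a(0) = c`.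
-/

open Filter Complex Topology

namespace Complex

theorem sinh_ne_zero_of_forall_ne {z : ℂ} (h : ¬ ∃ k : ℤ, z = Real.pi * I * k) : sinh z ≠ 0 := by
  intro hz
  obtain ⟨k, hk⟩ := sin_eq_zero_iff.mp (by rw [sin_mul_I, hz, zero_mul] : sin (z * I) = 0)
  refine h ⟨-k, ?_⟩
  push_cast
  linear_combination (-I) * hk + z * I_sq

theorem eventually_sinh_sub_ne_zero (x : ℂ) : ∀ᶠ z in 𝓝[≠] x, sinh (x - z) ≠ 0 := by
  have hderiv : HasDerivAt (fun z => sinh (x - z)) (cosh (x - x) * -1) x :=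
    ((hasDerivAt_id x).const_sub x).csinh
  simpa using hderiv.eventually_ne (c := 0) (by simp)

theorem tendsto_sinh_sub_mul_div_sinh_sub {f : ℂ → ℂ} {x : ℂ} (hf : ContinuousAt f x) :
    Tendsto (fun z => sinh (z - x) * (f z / sinh (x - z))) (𝓝[≠] x) (𝓝 (-f x)) := by
  refine (hf.tendsto.mono_left nhdsWithin_le_nhds).neg.congr' ?_
  filter_upwards [eventually_sinh_sub_ne_zero x] with z hz
  rw [← neg_sub x z, sinh_neg]
  field_simp

theorem tendsto_sinh_sub_mul_nhdsNE {f : ℂ → ℂ} {x : ℂ} (hf : ContinuousAt f x) :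
    Tendsto (fun z => sinh (z - x) * f z) (𝓝[≠] x) (𝓝 0) := by
  have hcont : ContinuousAt (fun z => sinh (z - x) * f z) x := by fun_prop
  simpa using hcont.tendsto.mono_left nhdsWithin_le_nhds

theorem continuousAt_prod_sinh_div_sinh {ι : Type*} (s : Finset ι) (ν : ι → ℂ) (γ : ℂ) {x : ℂ}
    (hν : ∀ t ∈ s, sinh (ν t - x) ≠ 0) :
    ContinuousAt (fun z => ∏ t ∈ s, sinh (ν t - z + γ) / sinh (ν t - z)) x :=
  tendsto_finsetProd s fun t ht => ContinuousAt.div (by fun_prop) (by fun_prop) (hν t ht)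

end Complex

/-- The residues of the coefficients `M₀` and `N_i^{(B)}` at `λ₀ = λ_i^B` are opposite:
`lim_{λ₀→λᵢᴮ} b(λ₀-λᵢᴮ) M₀(λ₀) = - lim_{λ₀→λᵢᴮ} b(λ₀-λᵢᴮ) Nᵢᴮ(λ₀)
  = c ∏ⱼ a(λᵢᴮ-μⱼ) ∏_{j≠i} a(λⱼᴮ-λᵢᴮ)/b(λⱼᴮ-λᵢᴮ)`. -/
theorem residues_M0_NiB (γ : ℂ) {L n : ℕ} (μ : Fin L → ℂ)
    (lamB lamC : Fin n → ℂ) (i : Fin n)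
    (hB : ∀ j, j ≠ i → ¬ ∃ k : ℤ, lamB i - lamB j = Real.pi * Complex.I * k)
    (hC : ∀ j, ¬ ∃ k : ℤ, lamB i - lamC j = Real.pi * Complex.I * k) :
    Tendsto (fun lam₀ : ℂ =>
        Complex.sinh (lam₀ - lamB i) *
          ((∏ j, Complex.sinh (lam₀ - μ j + γ)) *
            ((∏ t, Complex.sinh (lamC t - lam₀ + γ) / Complex.sinh (lamC t - lam₀)) -
             (∏ t, Complex.sinh (lamB t - lam₀ + γ) / Complex.sinh (lamB t - lam₀)))))
      (nhdsWithin (lamB i) {lamB i}ᶜ)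
      (nhds (Complex.sinh γ * (∏ j, Complex.sinh (lamB i - μ j + γ)) *
        ∏ t ∈ Finset.univ.erase i,
          Complex.sinh (lamB t - lamB i + γ) / Complex.sinh (lamB t - lamB i))) ∧
    Tendsto (fun lam₀ : ℂ =>
        Complex.sinh (lam₀ - lamB i) *
          ((Complex.sinh γ / Complex.sinh (lamB i - lam₀)) *
            (∏ j, Complex.sinh (lamB i - μ j + γ)) *
            ∏ t ∈ Finset.univ.erase i,
              Complex.sinh (lamB t - lamB i + γ) / Complex.sinh (lamB t - lamB i)))
      (nhdsWithin (lamB i) {lamB i}ᶜ)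
      (nhds (-(Complex.sinh γ * (∏ j, Complex.sinh (lamB i - μ j + γ)) *
        ∏ t ∈ Finset.univ.erase i,
          Complex.sinh (lamB t - lamB i + γ) / Complex.sinh (lamB t - lamB i)))) := by
  have sinh_sub_ne_zero {a b : ℂ} (h : ¬ ∃ k : ℤ, a - b = Real.pi * I * k) : sinh (b - a) ≠ 0 := by
    rw [← neg_sub, sinh_neg, neg_ne_zero]
    exact sinh_ne_zero_of_forall_ne h
  have hC' := continuousAt_prod_sinh_div_sinh Finset.univ lamC γ fun t _ => sinh_sub_ne_zero (hC t)
  have hRB := continuousAt_prod_sinh_div_sinh (Finset.univ.erase i) lamB γ fun t ht =>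
    sinh_sub_ne_zero (hB t (Finset.ne_of_mem_erase ht))
  have hP : ContinuousAt (fun z => ∏ j, sinh (z - μ j + γ)) (lamB i) := by fun_prop
  have hPC : ContinuousAt (fun z => (∏ j, sinh (z - μ j + γ)) *
      ∏ t, sinh (lamC t - z + γ) / sinh (lamC t - z)) (lamB i) := hP.mul hC'
  have hPAR : ContinuousAt (fun z => (∏ j, sinh (z - μ j + γ)) * sinh (lamB i - z + γ) *
      ∏ t ∈ Finset.univ.erase i, sinh (lamB t - z + γ) / sinh (lamB t - z)) (lamB i) :=
    (hP.mul (by fun_prop)).mul hRB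
  constructor
  · convert (tendsto_sinh_sub_mul_nhdsNE hPC).sub (tendsto_sinh_sub_mul_div_sinh_sub hPAR)
      using 2 with z
    · rw [← Finset.mul_prod_erase Finset.univ (fun t => sinh (lamB t - z + γ) / sinh (lamB t - z))
        (Finset.mem_univ i)]
      ring
    · rw [sub_self, zero_add, zero_sub, neg_neg]
      ring
  · convert tendsto_sinh_sub_mul_div_sinh_sub (continuousAt_const (y := sinh γ *
      (∏ j, sinh (lamB i - μ j + γ)) *
      ∏ t ∈ Finset.univ.erase i, sinh (lamB t - lamB i + γ) / sinh (lamB t - lamB i))) using 2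
    ring
end

section
/- Let q ∈ ℂ, q ≠ 0, and let P_j^± on (ℂ²)^{⊗L} be as defined via K and X^± (X^± in slot j, K^{∓1} before, K^{±1} after). Let |0⟩ = (1,0)^{⊗L} and ⟨0| its transpose. Then for any 1 ≤ a₁ < ⋯ < a_n ≤ L, ⟨0| P_{a₁}^+ ⋯ P_{a_n}^+ · P_{a₁}^- ⋯ P_{a_n}^- |0⟩ = q^{n(n-1)}; and for strictly increasing index sequences (a₁<⋯<a_n), (b₁<⋯<b_n) with (a)≠(b), the matrix element ⟨0| P_{a₁}^+ ⋯ P_{a_n}^+ P_{b₁}^- ⋯ P_{b_n}^- |0⟩ = 0. -/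
open Matrix

/-- `K(s) = diag(s, s⁻¹)` (with `s = q^{1/2}`). -/
noncomputable def Kmat (s : ℂ) : Matrix (Fin 2) (Fin 2) ℂ := !![s, 0; 0, s⁻¹]

/-- `X⁺` (for `true`) and `X⁻` (for `false`). -/
def Xmat : Bool → Matrix (Fin 2) (Fin 2) ℂ
  | true => !![0, 1; 0, 0]
  | false => !![0, 0; 1, 0]

/-- The operator `P_j^± = K^{∓1} ⊗ ⋯ ⊗ K^{∓1} ⊗ X^± ⊗ K^{±1} ⊗ ⋯ ⊗ K^{±1}`
on `(ℂ²)^{⊗L}`, with `X^±` in the `j`-th slot (`sg = true` for `+`). -/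
noncomputable def Pop (s : ℂ) (L : ℕ) (j : Fin L) (sg : Bool) :
    Matrix (Fin L → Fin 2) (Fin L → Fin 2) ℂ :=
  fun x y => ∏ k : Fin L,
    if k = j then Xmat sg (x k) (y k)
    else if k < j then Kmat (if sg then s⁻¹ else s) (x k) (y k)
    else Kmat (if sg then s else s⁻¹) (x k) (y k)

set_option linter.unreachableTactic false
set_option linter.unusedTactic false

noncomputable def Afac (s : ℂ) {L : ℕ} (k j : Fin L) : Matrix (Fin 2) (Fin 2) ℂ :=
  if k = j then Xmat true else if k < j then Kmat s⁻¹ else Kmat s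
noncomputable def Bfac (s : ℂ) {L : ℕ} (k j : Fin L) : Matrix (Fin 2) (Fin 2) ℂ :=
  if k = j then Xmat false else if k < j then Kmat s else Kmat s⁻¹

noncomputable def Fmat {L : ℕ} (f : Fin L → Matrix (Fin 2) (Fin 2) ℂ) :
    Matrix (Fin L → Fin 2) (Fin L → Fin 2) ℂ :=
  fun x y => ∏ k, f k (x k) (y k)

lemma Pop_true (s : ℂ) {L : ℕ} (j : Fin L) :
    Pop s L j true = Fmat (fun k => Afac s k j) := by
  funext x y
  simp only [Pop, Fmat, Afac]
  apply Finset.prod_congr rfl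
  intro k _
  split_ifs <;> first | rfl | simp_all

lemma Pop_false (s : ℂ) {L : ℕ} (j : Fin L) :
    Pop s L j false = Fmat (fun k => Bfac s k j) := by
  funext x y
  simp only [Pop, Fmat, Bfac]
  apply Finset.prod_congr rfl
  intro k _
  split_ifs <;> first | rfl | simp_all

def v0 : Fin 2 → ℂ := ![1,0]
def v1 : Fin 2 → ℂ := ![0,1]

lemma entry00 (M : Matrix (Fin 2) (Fin 2) ℂ) : M 0 0 = (M *ᵥ v0) 0 := by
  simp [v0, mulVec, dotProduct, Fin.sum_univ_two]

lemma Fmat_one {L : ℕ} : Fmat (fun _ : Fin L => (1 : Matrix (Fin 2) (Fin 2) ℂ)) = 1 := by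
  funext x y
  by_cases h : x = y
  · subst h; simp [Fmat, Matrix.one_apply]
  · obtain ⟨k, hk⟩ := Function.ne_iff.mp h
    rw [Fmat, Finset.prod_eq_zero (Finset.mem_univ k) (by simp [Matrix.one_apply, hk])]
    simp [Matrix.one_apply, h]

lemma Fmat_mul {L : ℕ} (f g : Fin L → Matrix (Fin 2) (Fin 2) ℂ) :
    Fmat f * Fmat g = Fmat (fun k => f k * g k) := by
  funext x y
  rw [Matrix.mul_apply]
  simp only [Fmat, Matrix.mul_apply]
  rw [Finset.prod_univ_sum, Fintype.piFinset_univ]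
  exact Finset.sum_congr rfl fun z _ => (Finset.prod_mul_distrib).symm

lemma Fmat_list_prod {L : ℕ} (l : List (Fin L → Matrix (Fin 2) (Fin 2) ℂ)) :
    (l.map Fmat).prod = Fmat (fun k => (l.map (fun f => f k)).prod) := by
  induction l with
  | nil => simpa using Fmat_one.symm
  | cons f l ih => simp only [List.map_cons, List.prod_cons, ih, Fmat_mul]

lemma element_factor (s : ℂ) {L n : ℕ} (a b : Fin n → Fin L) :
    ((List.ofFn fun i => Pop s L (a i) true).prod *
        (List.ofFn fun i => Pop s L (b i) false).prod)
      (fun _ => 0) (fun _ => 0)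
    = ∏ k : Fin L,
        ((((List.ofFn fun i => Afac s k (a i)).prod) *
          ((List.ofFn fun i => Bfac s k (b i)).prod)) *ᵥ v0) 0 := by
  have h1 : (List.ofFn fun i => Pop s L (a i) true)
      = List.map Fmat (List.ofFn fun i => fun k => Afac s k (a i)) := by
    rw [List.map_ofFn]
    exact congrArg List.ofFn (funext fun i => Pop_true s (a i))
  have h2 : (List.ofFn fun i => Pop s L (b i) false)
      = List.map Fmat (List.ofFn fun i => fun k => Bfac s k (b i)) := by
    rw [List.map_ofFn]
    exact congrArg List.ofFn (funext fun i => Pop_false s (b i))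
  rw [h1, h2, ← List.prod_append, ← List.map_append, Fmat_list_prod]
  show (∏ k : Fin L, _) = _
  apply Finset.prod_congr rfl
  intro k _
  simp only [List.map_append, List.map_ofFn, List.prod_append]
  exact entry00 _

lemma Kv0 (t : ℂ) : Kmat t *ᵥ v0 = t • v0 := by
  funext i; fin_cases i <;> simp [Kmat, v0, mulVec, dotProduct, Fin.sum_univ_two]
lemma Kv1 (t : ℂ) : Kmat t *ᵥ v1 = t⁻¹ • v1 := by
  funext i; fin_cases i <;> simp [Kmat, v1, mulVec, dotProduct, Fin.sum_univ_two]
lemma Xtv0 : Xmat true *ᵥ v0 = 0 := by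
  funext i; fin_cases i <;> simp [Xmat, v0, mulVec, dotProduct, Fin.sum_univ_two]
lemma Xtv1 : Xmat true *ᵥ v1 = v0 := by
  funext i; fin_cases i <;> simp [Xmat, v0, v1, mulVec, dotProduct, Fin.sum_univ_two]
lemma Xfv0 : Xmat false *ᵥ v0 = v1 := by
  funext i; fin_cases i <;> simp [Xmat, v0, v1, mulVec, dotProduct, Fin.sum_univ_two]

-- B list, k not in range
lemma Bvec_not (s : ℂ) {L n : ℕ} (b : Fin n → Fin L) (k : Fin L) (h : k ∉ Set.range b) :
    (List.ofFn fun i => Bfac s k (b i)).prod *ᵥ v0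
      = (∏ i, if k < b i then s else s⁻¹) • v0 := by
  induction n with
  | zero => simp
  | succ n ih =>
    have h0 : k ≠ b 0 := fun hc => h ⟨0, hc.symm⟩
    have ht : k ∉ Set.range (fun i : Fin n => b i.succ) := by
      rintro ⟨i, hi⟩; exact h ⟨i.succ, hi⟩
    rw [List.ofFn_succ, List.prod_cons, ← Matrix.mulVec_mulVec, ih _ ht,
      Matrix.mulVec_smul, Fin.prod_univ_succ]
    by_cases hlt : k < b 0
    · rw [Bfac, if_neg h0, if_pos hlt, Kv0, if_pos hlt, smul_smul, mul_comm]
    · rw [Bfac, if_neg h0, if_neg hlt, Kv0, if_neg hlt, smul_smul, mul_comm]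

-- B list, k in range
lemma Bvec_mem (s : ℂ) {L n : ℕ} (b : Fin n → Fin L) (hb : StrictMono b) (k : Fin L)
    (h : k ∈ Set.range b) :
    (List.ofFn fun i => Bfac s k (b i)).prod *ᵥ v0 = (s ^ (n - 1)) • v1 := by
  induction n with
  | zero => obtain ⟨i, _⟩ := h; exact absurd i.2 (by simp)
  | succ n ih =>
    obtain ⟨m, hm⟩ := h
    rw [List.ofFn_succ, List.prod_cons, ← Matrix.mulVec_mulVec]
    rcases Fin.eq_zero_or_eq_succ m with h0 | ⟨m', hm'⟩
    · subst h0
      have ht : k ∉ Set.range (fun i : Fin n => b i.succ) := by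
        rintro ⟨i, hi⟩
        exact absurd (hi ▸ hm ▸ hb (Fin.succ_pos i)) (lt_irrefl _)
      rw [Bvec_not s _ _ ht]
      have : (∏ i : Fin n, if k < b i.succ then s else s⁻¹) = s ^ n := by
        rw [Finset.prod_congr rfl (fun i _ => if_pos (hm ▸ hb (Fin.succ_pos i)))]
        simp
      rw [this, Matrix.mulVec_smul, Bfac, if_pos hm.symm, Xfv0]
      simp
    · subst hm'
      have hn : k ∈ Set.range (fun i : Fin n => b i.succ) := ⟨m', hm⟩
      rw [ih (fun i => b i.succ) (fun i j hij => hb (Fin.succ_lt_succ_iff.mpr hij)) hn, Matrix.mulVec_smul]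
      have hlt : b 0 < k := hm ▸ hb (Fin.succ_pos m')
      rw [Bfac, if_neg (ne_of_gt hlt), if_neg (not_lt.mpr hlt.le), Kv1, inv_inv, smul_smul]
      have h1 : n + 1 - 1 = (n - 1) + 1 := by have := m'.pos; omega
      rw [h1, pow_succ, mul_comm]

lemma Avec1_not (s : ℂ) {L n : ℕ} (a : Fin n → Fin L) (k : Fin L) (h : k ∉ Set.range a) :
    (List.ofFn fun i => Afac s k (a i)).prod *ᵥ v1
      = (∏ i, if k < a i then s else s⁻¹) • v1 := by
  induction n with
  | zero => simp
  | succ n ih =>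
    have h0 : k ≠ a 0 := fun hc => h ⟨0, hc.symm⟩
    have ht : k ∉ Set.range (fun i : Fin n => a i.succ) := by
      rintro ⟨i, hi⟩; exact h ⟨i.succ, hi⟩
    rw [List.ofFn_succ, List.prod_cons, ← Matrix.mulVec_mulVec, ih _ ht,
      Matrix.mulVec_smul, Fin.prod_univ_succ]
    by_cases hlt : k < a 0
    · rw [Afac, if_neg h0, if_pos hlt, Kv1, inv_inv, if_pos hlt, smul_smul, mul_comm]
    · rw [Afac, if_neg h0, if_neg hlt, Kv1, if_neg hlt, smul_smul, mul_comm]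

lemma Avec1_mem (s : ℂ) {L n : ℕ} (a : Fin n → Fin L) (ha : StrictMono a) (k : Fin L)
    (h : k ∈ Set.range a) :
    (List.ofFn fun i => Afac s k (a i)).prod *ᵥ v1 = (s ^ (n - 1)) • v0 := by
  induction n with
  | zero => obtain ⟨i, _⟩ := h; exact absurd i.2 (by simp)
  | succ n ih =>
    obtain ⟨m, hm⟩ := h
    rw [List.ofFn_succ, List.prod_cons, ← Matrix.mulVec_mulVec]
    rcases Fin.eq_zero_or_eq_succ m with h0 | ⟨m', hm'⟩
    · subst h0
      have ht : k ∉ Set.range (fun i : Fin n => a i.succ) := by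
        rintro ⟨i, hi⟩
        exact absurd (hi ▸ hm ▸ ha (Fin.succ_pos i)) (lt_irrefl _)
      rw [Avec1_not s _ _ ht]
      have : (∏ i : Fin n, if k < a i.succ then s else s⁻¹) = s ^ n := by
        rw [Finset.prod_congr rfl (fun i _ => if_pos (hm ▸ ha (Fin.succ_pos i)))]
        simp
      rw [this, Matrix.mulVec_smul, Afac, if_pos hm.symm, Xtv1]
      simp
    · subst hm'
      have hn : k ∈ Set.range (fun i : Fin n => a i.succ) := ⟨m', hm⟩
      rw [ih (fun i => a i.succ) (fun i j hij => ha (Fin.succ_lt_succ_iff.mpr hij)) hn,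
        Matrix.mulVec_smul]
      have hlt : a 0 < k := hm ▸ ha (Fin.succ_pos m')
      rw [Afac, if_neg (ne_of_gt hlt), if_neg (not_lt.mpr hlt.le), Kv0, smul_smul]
      have h1 : n + 1 - 1 = (n - 1) + 1 := by have := m'.pos; omega
      rw [h1, pow_succ, mul_comm]

lemma Avec0_not (s : ℂ) {L n : ℕ} (a : Fin n → Fin L) (k : Fin L) (h : k ∉ Set.range a) :
    (List.ofFn fun i => Afac s k (a i)).prod *ᵥ v0
      = (∏ i, if k < a i then s⁻¹ else s) • v0 := by
  induction n with
  | zero => simp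
  | succ n ih =>
    have h0 : k ≠ a 0 := fun hc => h ⟨0, hc.symm⟩
    have ht : k ∉ Set.range (fun i : Fin n => a i.succ) := by
      rintro ⟨i, hi⟩; exact h ⟨i.succ, hi⟩
    rw [List.ofFn_succ, List.prod_cons, ← Matrix.mulVec_mulVec, ih _ ht,
      Matrix.mulVec_smul, Fin.prod_univ_succ]
    by_cases hlt : k < a 0
    · rw [Afac, if_neg h0, if_pos hlt, Kv0, if_pos hlt, smul_smul, mul_comm]
    · rw [Afac, if_neg h0, if_neg hlt, Kv0, if_neg hlt, smul_smul, mul_comm]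

lemma Avec0_mem (s : ℂ) {L n : ℕ} (a : Fin n → Fin L) (k : Fin L) (h : k ∈ Set.range a) :
    (List.ofFn fun i => Afac s k (a i)).prod *ᵥ v0 = 0 := by
  induction n with
  | zero => obtain ⟨i, _⟩ := h; exact absurd i.2 (by simp)
  | succ n ih =>
    obtain ⟨m, hm⟩ := h
    rw [List.ofFn_succ, List.prod_cons, ← Matrix.mulVec_mulVec]
    by_cases h0 : k = a 0
    · by_cases ht : k ∈ Set.range (fun i : Fin n => a i.succ)
      · rw [ih _ ht, Matrix.mulVec_zero]
      · rw [Avec0_not s _ _ ht, Matrix.mulVec_smul, Afac, if_pos h0, Xtv0, smul_zero]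
    · have ht : k ∈ Set.range (fun i : Fin n => a i.succ) := by
        rcases Fin.eq_zero_or_eq_succ m with h1 | ⟨m', hm'⟩
        · exact absurd (h1 ▸ hm).symm h0
        · exact ⟨m', by simpa [← hm'] using hm⟩
      rw [ih _ ht, Matrix.mulVec_zero]


/-- Matrix elements of ordered products of `P⁺`'s and `P⁻`'s between pseudo-vacua:
`⟨0| P_{a₁}⁺⋯P_{aₙ}⁺ P_{a₁}⁻⋯P_{aₙ}⁻ |0⟩ = q^{n(n-1)}`, and the element vanishes
for distinct strictly increasing index sequences. -/
theorem Pop_vacuum_matrix_elements (q s : ℂ) (hq : q ≠ 0) (hs : s ^ 2 = q)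
    {L n : ℕ} (a b : Fin n → Fin L) (ha : StrictMono a) (hb : StrictMono b) :
    (((List.ofFn fun i => Pop s L (a i) true).prod *
        (List.ofFn fun i => Pop s L (a i) false).prod)
      (fun _ => 0) (fun _ => 0) = q ^ (n * (n - 1))) ∧
    (a ≠ b →
      ((List.ofFn fun i => Pop s L (a i) true).prod *
          (List.ofFn fun i => Pop s L (b i) false).prod)
        (fun _ => 0) (fun _ => 0) = 0) := by
  have hs0 : s ≠ 0 := by
    intro h
    apply hq
    rw [← hs, h]
    ring
  constructor
  · rw [element_factor]
    have step : ∀ k : Fin L,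
        ((((List.ofFn fun i => Afac s k (a i)).prod) *
          ((List.ofFn fun i => Bfac s k (a i)).prod)) *ᵥ v0) 0
        = if k ∈ Finset.image a Finset.univ then s ^ (n-1) * s ^ (n-1) else 1 := by
      intro k
      by_cases hk : k ∈ Finset.image a Finset.univ
      · rw [if_pos hk]
        have hk' : k ∈ Set.range a := by
          obtain ⟨i, _, hi⟩ := Finset.mem_image.mp hk
          exact ⟨i, hi⟩
        rw [← Matrix.mulVec_mulVec, Bvec_mem s a ha k hk', Matrix.mulVec_smul,
          Avec1_mem s a ha k hk']
        simp [v0, smul_smul]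
      · rw [if_neg hk]
        have hk' : k ∉ Set.range a := by
          rintro ⟨i, hi⟩
          exact hk (Finset.mem_image.mpr ⟨i, Finset.mem_univ i, hi⟩)
        rw [← Matrix.mulVec_mulVec, Bvec_not s a k hk', Matrix.mulVec_smul,
          Avec0_not s a k hk']
        have : ((∏ i, if k < a i then s else s⁻¹) •
            (∏ i, if k < a i then s⁻¹ else s) • v0) 0
            = ∏ i : Fin n, ((if k < a i then s else s⁻¹) * (if k < a i then s⁻¹ else s)) := by
          simp only [Pi.smul_apply, smul_eq_mul]
          rw [show (v0 0 : ℂ) = 1 by simp [v0], mul_one, ← Finset.prod_mul_distrib]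
        rw [this]
        rw [Finset.prod_congr rfl (fun i _ => ?_), Finset.prod_const_one]
        by_cases hlt : k < a i
        · rw [if_pos hlt, if_pos hlt, mul_inv_cancel₀ hs0]
        · rw [if_neg hlt, if_neg hlt, inv_mul_cancel₀ hs0]
    rw [Finset.prod_congr rfl (fun k _ => step k), Finset.prod_ite_mem,
      Finset.univ_inter, Finset.prod_const,
      Finset.card_image_of_injective _ ha.injective, Finset.card_univ, Fintype.card_fin]
    have h2 : s ^ (n-1) * s ^ (n-1) = (s ^ 2) ^ (n-1) := by ring
    rw [h2, hs, ← pow_mul, Nat.mul_comm]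
  · intro hab
    rw [element_factor]
    haveI : WellFoundedLT (Fin n) := Finite.to_wellFoundedLT
    have hri := StrictMono.range_inj (f := a) (g := b) ha hb
    have hr : Set.range a ≠ Set.range b := fun h => hab (hri.mp h)
    obtain ⟨k, hk⟩ : ∃ k, ¬(k ∈ Set.range a ↔ k ∈ Set.range b) := by
      by_contra h
      push_neg at h
      exact hr (Set.ext fun k => h k)
    apply Finset.prod_eq_zero (Finset.mem_univ k)
    rw [← Matrix.mulVec_mulVec]
    by_cases hka : k ∈ Set.range a
    · have hkb : k ∉ Set.range b := fun hkb => hk ⟨fun _ => hkb, fun _ => hka⟩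
      rw [Bvec_not s b k hkb, Matrix.mulVec_smul, Avec0_mem s a k hka, smul_zero]
      rfl
    · have hkb : k ∈ Set.range b := by
        by_contra hkb
        exact hk ⟨fun h => absurd h hka, fun h => absurd h hkb⟩
      rw [Bvec_mem s b hb k hkb, Matrix.mulVec_smul, Avec1_not s a k hka]
      simp [v1, smul_smul]
end
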